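/- Let H be a complex Hilbert space and let γ and P be bounded self-adjoint operators on H with 0 ≤ γ ≤ 1 and 0 ≤ P ≤ 1, both of trace class, with Tr γ = Tr P. Then Tr(γ(1-γ)) ≤ 2 Tr((1-P)γ). -/

import Mathlib

set_option synthInstance.maxHeartbeats 1000000
set_option maxHeartbeats 1000000

variable {H : Type*} [NormedAddCommGroup H] [InnerProductSpace ℂ H] [CompleteSpace H]

/-- The trace of a bounded operator computed via a Hilbert basis `b`
(real part of the diagonal sum).  For trace-class operators this is the trace. -/
noncomputable def traceIn {ι : Type*} (b : HilbertBasis ι ℂ H) (A : H →L[ℂ] H) : ℝ :=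
  ∑' i, ((inner ℂ (b i) (A (b i)) : ℂ)).re

/-
Since `0 ≤ P ≤ 1` forces `P² ≤ P`, the operator `P - Pγ - γP + γ²` dominates `(P - γ)² ≥ 0`.
The diagonal entries of `γP` and `Pγ` have the same real part, so summing over the basis gives
`Tr P - 2 Tr (Pγ) + Tr γ² ≥ 0`, which by `Tr γ = Tr P` is `2 Tr ((1 - P)γ) - Tr (γ(1 - γ)) ≥ 0`.
-/

section StarOrderedRing

variable {R : Type*} [Ring R] [PartialOrder R] [StarRing R] [StarOrderedRing R]

-- `p - p² = p (1 - p) p + (1 - p) p (1 - p)`, a sum of two conjugates of nonnegative elements.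
lemma mul_self_le_self_of_nonneg_of_le_one {p : R} (h0 : 0 ≤ p) (h1 : p ≤ 1) : p * p ≤ p := by
  have hp : IsSelfAdjoint p := .of_nonneg h0
  have h1' : 0 ≤ 1 - p := sub_nonneg.mpr h1
  rw [← sub_nonneg]
  convert add_nonneg (hp.conjugate_nonneg h1') ((IsSelfAdjoint.of_nonneg h1').conjugate_nonneg h0)
    using 1
  noncomm_ring

lemma mul_add_mul_le_add_mul_self {p g : R} (hp0 : 0 ≤ p) (hp1 : p ≤ 1) (hg : IsSelfAdjoint g) :
    p * g + g * p ≤ p + g * g := by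
  have hp : IsSelfAdjoint p := .of_nonneg hp0
  rw [← sub_nonneg]
  convert add_nonneg (sub_nonneg.mpr (mul_self_le_self_of_nonneg_of_le_one hp0 hp1))
    (star_mul_self_nonneg (p - g)) using 1
  rw [star_sub, hp.star_eq, hg.star_eq]
  noncomm_ring

end StarOrderedRing

namespace ContinuousLinearMap

variable {E : Type*} [NormedAddCommGroup E] [InnerProductSpace ℂ E]

lemma re_inner_apply_le_of_le {A B : E →L[ℂ] E} (h : A ≤ B) (x : E) :
    (inner ℂ x (A x)).re ≤ (inner ℂ x (B x)).re := by
  have := ((le_def A B).mp h).re_inner_nonneg_right x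
  simpa [inner_sub_right] using this

lemma re_inner_apply_apply_comm [CompleteSpace E] {A B : E →L[ℂ] E} (hA : IsSelfAdjoint A)
    (hB : IsSelfAdjoint B) (x : E) : (inner ℂ x (A (B x))).re = (inner ℂ x (B (A x))).re := by
  have hAB : inner ℂ (A x) (B x) = inner ℂ x (A (B x)) := hA.isSymmetric x (B x)
  have hBA : inner ℂ (B x) (A x) = inner ℂ x (B (A x)) := hB.isSymmetric x (A x)
  rw [← hAB, ← hBA, ← inner_conj_symm, Complex.conj_re]

end ContinuousLinearMap

lemma re_inner_mul_one_sub_apply_le {γ P : H →L[ℂ] H} (hγ : IsSelfAdjoint γ) (hP0 : 0 ≤ P)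
    (hP1 : P ≤ 1) (x : H) :
    (inner ℂ x ((γ * (1 - γ)) x)).re ≤
      (inner ℂ x (P x)).re - (inner ℂ x (γ x)).re + 2 * (inner ℂ x (((1 - P) * γ) x)).re := by
  have h := ContinuousLinearMap.re_inner_apply_le_of_le (mul_add_mul_le_add_mul_self hP0 hP1 hγ) x
  simp only [add_apply, sub_apply, mul_apply_eq_comp, one_apply_eq_self, map_sub,
    inner_add_right, inner_sub_right, Complex.add_re, Complex.sub_re] at h ⊢
  rw [ContinuousLinearMap.re_inner_apply_apply_comm hγ (.of_nonneg hP0)] at h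
  linarith

theorem stmt0_general {ι : Type*} (b : HilbertBasis ι ℂ H) (γ P : H →L[ℂ] H)
    (hγsa : IsSelfAdjoint γ) (hP0 : 0 ≤ P) (hP1 : P ≤ 1)
    (hsγ : Summable fun i => ((inner ℂ (b i) (γ (b i)) : ℂ)).re)
    (hsP : Summable fun i => ((inner ℂ (b i) (P (b i)) : ℂ)).re)
    (hs1 : Summable fun i => ((inner ℂ (b i) ((γ * (1 - γ)) (b i)) : ℂ)).re)
    (hs2 : Summable fun i => ((inner ℂ (b i) (((1 - P) * γ) (b i)) : ℂ)).re)
    (htr : traceIn b γ = traceIn b P) :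
    traceIn b (γ * (1 - γ)) ≤ 2 * traceIn b ((1 - P) * γ) := by
  calc traceIn b (γ * (1 - γ))
      ≤ ∑' i, ((inner ℂ (b i) (P (b i))).re - (inner ℂ (b i) (γ (b i))).re
          + 2 * (inner ℂ (b i) (((1 - P) * γ) (b i))).re) :=
        hs1.tsum_le_tsum (fun i => re_inner_mul_one_sub_apply_le hγsa hP0 hP1 (b i))
          ((hsP.sub hsγ).add (hs2.mul_left 2))
    _ = traceIn b P - traceIn b γ + 2 * traceIn b ((1 - P) * γ) := by
        rw [(hsP.sub hsγ).tsum_add (hs2.mul_left 2), hsP.tsum_sub hsγ, tsum_mul_left]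
        rfl
    _ = 2 * traceIn b ((1 - P) * γ) := by rw [htr]; ring

/-- If `γ`, `P` are self-adjoint trace-class operators on a complex Hilbert space with
`0 ≤ γ ≤ 1`, `0 ≤ P ≤ 1` and `Tr γ = Tr P`, then `Tr (γ(1-γ)) ≤ 2 Tr ((1-P)γ)`. -/
theorem stmt0 {ι : Type*} (b : HilbertBasis ι ℂ H) (γ P : H →L[ℂ] H)
    (hγsa : IsSelfAdjoint γ) (hPsa : IsSelfAdjoint P)
    (hγ0 : 0 ≤ γ) (hγ1 : γ ≤ 1) (hP0 : 0 ≤ P) (hP1 : P ≤ 1)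
    (hsγ : Summable fun i => ((inner ℂ (b i) (γ (b i)) : ℂ)).re)
    (hsP : Summable fun i => ((inner ℂ (b i) (P (b i)) : ℂ)).re)
    (hs1 : Summable fun i => ((inner ℂ (b i) ((γ * (1 - γ)) (b i)) : ℂ)).re)
    (hs2 : Summable fun i => ((inner ℂ (b i) (((1 - P) * γ) (b i)) : ℂ)).re)
    (htr : traceIn b γ = traceIn b P) :
    traceIn b (γ * (1 - γ)) ≤ 2 * traceIn b ((1 - P) * γ) :=
  stmt0_general b γ P hγsa hP0 hP1 hsγ hsP hs1 hs2 htr
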